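/- arXiv:2502.09072 — 5 statements merged into one kernel-verified Lean document; each statement's English description precedes it below -/
import Mathlib

section
/- Let G be a finite simple graph on vertex set {1,…,n}, and let u, v be packed words of length n such that u refines v (the set composition encoded by v is obtained by merging adjacent blocks of the one encoded by u). Then asc_G(u) = asc_G(v) + Σ_{i=1}^{max(v)} asc_{G_i(v)}(u restricted to v^{-1}(i)), where asc_G(w) is the number of edges (i,j) of G with i<j and w_i < w_j, and G_i(v) is the induced subgraph of G on the vertices colored i by v. -/
/-! Since `v = f ∘ u` with `f` monotone, a `u`-ascent on an edge is either a `v`-ascent or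
joins two vertices of the same `v`-color, and never both; the second kind is then sorted by
that color. -/

/-- Number of ascents of a coloring `w` of a graph `G` on `{0,…,n-1}`:
edges `(i,j)` with `i < j` and `w i < w j`. -/
def ascG {n : ℕ} (G : SimpleGraph (Fin n)) [DecidableRel G.Adj] (w : Fin n → ℕ) : ℕ :=
  (Finset.univ.filter
    (fun p : Fin n × Fin n => p.1 < p.2 ∧ G.Adj p.1 p.2 ∧ w p.1 < w p.2)).card

/-- Number of ascents of `u` on the induced subgraph `G_c(v)` of `G` on the vertices
colored `c` by `v` (the packed restriction of `u` has the same ascents). -/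
def ascWithin {n : ℕ} (G : SimpleGraph (Fin n)) [DecidableRel G.Adj] (v : Fin n → ℕ)
    (c : ℕ) (u : Fin n → ℕ) : ℕ :=
  (Finset.univ.filter (fun p : Fin n × Fin n =>
    p.1 < p.2 ∧ G.Adj p.1 p.2 ∧ v p.1 = c ∧ v p.2 = c ∧ u p.1 < u p.2)).card

/-- `w` is a packed word with letters exactly `1,…,r`. -/
def PackedWord {n : ℕ} (w : Fin n → ℕ) (r : ℕ) : Prop :=
  (∀ i, w i ∈ Finset.Icc 1 r) ∧ ∀ k ∈ Finset.Icc 1 r, ∃ i, w i = k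

theorem Monotone.lt_iff_lt_or_eq_and_lt {α β : Type*} [LinearOrder α] [LinearOrder β]
    {f : α → β} (hf : Monotone f) {x y : α} :
    x < y ↔ f x < f y ∨ (f x = f y ∧ x < y) := by
  refine ⟨fun hxy => ?_, ?_⟩
  · rcases (hf hxy.le).lt_or_eq with hlt | heq
    · exact .inl hlt
    · exact .inr ⟨heq, hxy⟩
  · rintro (hlt | ⟨-, hxy⟩)
    · exact hf.reflect_lt hlt
    · exact hxy

def ascWithinClasses {n : ℕ} (G : SimpleGraph (Fin n)) [DecidableRel G.Adj]
    (v u : Fin n → ℕ) : ℕ :=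
  (Finset.univ.filter (fun p : Fin n × Fin n =>
    p.1 < p.2 ∧ G.Adj p.1 p.2 ∧ v p.1 = v p.2 ∧ u p.1 < u p.2)).card

theorem ascG_eq_ascG_add_ascWithinClasses {n : ℕ} (G : SimpleGraph (Fin n))
    [DecidableRel G.Adj] {u v : Fin n → ℕ} {f : ℕ → ℕ} (hf : Monotone f)
    (hvf : ∀ i, v i = f (u i)) :
    ascG G u = ascG G v + ascWithinClasses G v u := by
  have hsplit : Finset.univ.filter (fun p : Fin n × Fin n =>
      p.1 < p.2 ∧ G.Adj p.1 p.2 ∧ u p.1 < u p.2) =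
      Finset.univ.filter (fun p : Fin n × Fin n => p.1 < p.2 ∧ G.Adj p.1 p.2 ∧ v p.1 < v p.2) ∪
      Finset.univ.filter (fun p : Fin n × Fin n =>
        p.1 < p.2 ∧ G.Adj p.1 p.2 ∧ v p.1 = v p.2 ∧ u p.1 < u p.2) := by
    ext p
    have hasc := hf.lt_iff_lt_or_eq_and_lt (x := u p.1) (y := u p.2)
    simp only [Finset.mem_union, Finset.mem_filter, Finset.mem_univ, true_and, hvf]
    tauto
  have hdisj : Disjoint
      (Finset.univ.filter (fun p : Fin n × Fin n => p.1 < p.2 ∧ G.Adj p.1 p.2 ∧ v p.1 < v p.2))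
      (Finset.univ.filter (fun p : Fin n × Fin n =>
        p.1 < p.2 ∧ G.Adj p.1 p.2 ∧ v p.1 = v p.2 ∧ u p.1 < u p.2)) := by
    simp only [Finset.disjoint_filter]
    rintro p - ⟨-, -, hlt⟩ ⟨-, -, heq, -⟩
    exact hlt.ne heq
  rw [ascG, ascG, ascWithinClasses, hsplit, Finset.card_union_of_disjoint hdisj]

theorem sum_ascWithin_eq_ascWithinClasses {n : ℕ} (G : SimpleGraph (Fin n))
    [DecidableRel G.Adj] (u : Fin n → ℕ) {v : Fin n → ℕ} {S : Finset ℕ}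
    (hS : ∀ i, v i ∈ S) :
    ∑ c ∈ S, ascWithin G v c u = ascWithinClasses G v u := by
  rw [ascWithinClasses, Finset.card_eq_sum_card_fiberwise (f := fun p => v p.1)
    (fun p _ => hS p.1)]
  refine Finset.sum_congr rfl fun c _ => ?_
  rw [ascWithin, Finset.filter_filter]
  congr 1
  ext p
  simp only [Finset.mem_filter, Finset.mem_univ, true_and]
  constructor
  · rintro ⟨hlt, hadj, h1, h2, hu⟩
    exact ⟨⟨hlt, hadj, h1.trans h2.symm, hu⟩, h1⟩
  · rintro ⟨⟨hlt, hadj, heq, hu⟩, h1⟩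
    exact ⟨hlt, hadj, h1, heq ▸ h1, hu⟩

theorem stmt0_general {n : ℕ} (G : SimpleGraph (Fin n)) [DecidableRel G.Adj]
    (u v : Fin n → ℕ) (r : ℕ) (hv : PackedWord v r)
    (href : ∃ f : ℕ → ℕ, Monotone f ∧ ∀ i, v i = f (u i)) :
    ascG G u = ascG G v + ∑ c ∈ Finset.Icc 1 r, ascWithin G v c u := by
  obtain ⟨f, hf, hvf⟩ := href
  rw [sum_ascWithin_eq_ascWithinClasses G u hv.1,
    ascG_eq_ascG_add_ascWithinClasses G hf hvf]

/-- Lemma 1 of the paper: if the packed word `u` refines `v` (i.e. `v` is obtained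
from `u` by merging adjacent blocks, equivalently `v = f ∘ u` for a monotone `f`), then
`asc_G(u) = asc_G(v) + Σ_{c=1}^{max v} asc_{G_c(v)}(u|_{v⁻¹(c)})`. -/
theorem stmt0 {n : ℕ} (G : SimpleGraph (Fin n)) [DecidableRel G.Adj]
    (u v : Fin n → ℕ) (r s : ℕ) (hu : PackedWord u s) (hv : PackedWord v r)
    (href : ∃ f : ℕ → ℕ, Monotone f ∧ ∀ i, v i = f (u i)) :
    ascG G u = ascG G v + ∑ c ∈ Finset.Icc 1 r, ascWithin G v c u :=
  stmt0_general G u v r hv href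
end

section
/- Let G be a finite simple graph on {1,…,n} and v a packed word of length n with max(v) = r. The proper packed colorings u of G that refine v are in bijection with tuples (w_1,…,w_r) where each w_i is a proper packed coloring of the induced subgraph G_i(v) on the vertices colored i by v. The bijection sends u to the tuple of packed restrictions (u|_{v^{-1}(1)}, …, u|_{v^{-1}(r)}). -/
open Finset

/-- `w` is a proper coloring of `G`. -/
def ProperColoring {n : ℕ} (G : SimpleGraph (Fin n)) (w : Fin n → ℕ) : Prop :=
  ∀ i j, G.Adj i j → w i ≠ w j

/-- `u` refines `v`: the ordered set partition encoded by `v` is obtained by merging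
adjacent blocks of that of `u`, i.e. `v = f ∘ u` for some monotone `f`. -/
def Refines {n : ℕ} (u v : Fin n → ℕ) : Prop :=
  ∃ f : ℕ → ℕ, Monotone f ∧ ∀ i, v i = f (u i)

/-- The packed restriction of `u` to the positions colored `c` by `v`, extended by `0`
outside these positions: the value at `j` is the number of distinct values of `u`
on `v⁻¹(c)` that are `≤ u j`. -/
def packRestrict {n : ℕ} (v : Fin n → ℕ) (c : ℕ) (u : Fin n → ℕ) : Fin n → ℕ :=
  fun j => if v j = c then
    (((Finset.univ.filter (fun k : Fin n => v k = c)).image u).filter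
      (fun x => x ≤ u j)).card
  else 0

/- ### Rank lemmas -/

lemma rank_mem (A : Finset ℕ) {x} (hx : x ∈ A) :
    (A.filter (· ≤ x)).card ∈ Finset.Icc 1 A.card := by
  refine mem_Icc.2 ⟨?_, card_le_card (filter_subset _ _)⟩
  exact card_pos.2 ⟨x, mem_filter.2 ⟨hx, le_refl x⟩⟩

lemma rank_lt (A : Finset ℕ) {x y : ℕ} (hy : y ∈ A) (h : x < y) :
    (A.filter (· ≤ x)).card < (A.filter (· ≤ y)).card := by
  apply card_lt_card
  constructor
  · intro z hz
    rw [mem_filter] at hz ⊢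
    exact ⟨hz.1, le_trans hz.2 h.le⟩
  · intro hsub
    have := hsub (mem_filter.2 ⟨hy, le_refl y⟩)
    rw [mem_filter] at this
    omega

lemma rank_injOn (A : Finset ℕ) {x y : ℕ} (hx : x ∈ A) (hy : y ∈ A)
    (h : (A.filter (· ≤ x)).card = (A.filter (· ≤ y)).card) : x = y := by
  rcases lt_trichotomy x y with h' | h' | h'
  · exact absurd h (rank_lt A hy h').ne
  · exact h'
  · exact absurd h.symm (rank_lt A hx h').ne

lemma rank_surj (A : Finset ℕ) {t : ℕ} (ht : t ∈ Finset.Icc 1 A.card) :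
    ∃ x ∈ A, (A.filter (· ≤ x)).card = t := by
  have := Finset.surj_on_of_inj_on_of_card_le (s := A) (t := Finset.Icc 1 A.card)
    (f := fun x _ => (A.filter (· ≤ x)).card)
    (fun x hx => rank_mem A hx) (fun x y hx hy h => rank_injOn A hx hy h)
    (by simp) t ht
  obtain ⟨x, hx, hx2⟩ := this
  exact ⟨x, hx, hx2.symm⟩

/- ### Forward analysis -/

variable {n : ℕ} {v u : Fin n → ℕ} {s : ℕ} {f : ℕ → ℕ}

lemma Aeq (hu : PackedWord u s) (hvf : ∀ i, v i = f (u i)) (c : ℕ) :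
    ((Finset.univ.filter (fun k : Fin n => v k = c)).image u)
      = (Finset.Icc 1 s).filter (fun x => f x = c) := by
  ext x
  simp only [mem_image, mem_filter, mem_univ, true_and]
  constructor
  · rintro ⟨i, hi, rfl⟩
    exact ⟨hu.1 i, by rw [← hvf i, hi]⟩
  · rintro ⟨hx, hfx⟩
    obtain ⟨i, rfl⟩ := hu.2 x hx
    exact ⟨i, by rw [hvf i, hfx], rfl⟩

lemma decomp (hu : PackedWord u s) (hf : Monotone f) (hvf : ∀ i, v i = f (u i)) (j : Fin n) :
    u j = ((Finset.Icc 1 s).filter (fun x => f x < v j)).card + packRestrict v (v j) u j := by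
  rw [packRestrict, if_pos rfl, Aeq hu hvf, Finset.filter_filter]
  have key : Finset.Icc 1 (u j) =
      (Finset.Icc 1 s).filter (fun x => f x < v j) ∪
      (Finset.Icc 1 s).filter (fun x => f x = v j ∧ x ≤ u j) := by
    ext x
    simp only [mem_Icc, mem_union, mem_filter]
    have hus := Finset.mem_Icc.1 (hu.1 j)
    constructor
    · rintro ⟨h1, h2⟩
      have hfx : f x ≤ v j := by rw [hvf j]; exact hf h2
      rcases lt_or_eq_of_le hfx with h | h
      · exact Or.inl ⟨⟨h1, h2.trans hus.2⟩, h⟩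
      · exact Or.inr ⟨⟨h1, h2.trans hus.2⟩, h, h2⟩
    · rintro (⟨⟨h1, h2⟩, h3⟩ | ⟨⟨h1, h2⟩, h3, h4⟩)
      · refine ⟨h1, ?_⟩
        by_contra hc
        have : u j ≤ x := by omega
        have := hf this
        rw [← hvf j] at this
        omega
      · exact ⟨h1, h4⟩
  have hdisj : Disjoint ((Finset.Icc 1 s).filter (fun x => f x < v j))
      ((Finset.Icc 1 s).filter (fun x => f x = v j ∧ x ≤ u j)) := by
    rw [Finset.disjoint_filter]
    intro x _ h1 h2
    omega
  have := Finset.card_union_of_disjoint hdisj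
  rw [← key] at this
  rw [Nat.card_Icc] at this
  have hj := Finset.mem_Icc.1 (hu.1 j)
  omega

lemma a_succ (hu : PackedWord u s) (hvf : ∀ i, v i = f (u i)) (c : ℕ) :
    ((Finset.Icc 1 s).filter (fun x => f x < c + 1)).card
      = ((Finset.Icc 1 s).filter (fun x => f x < c)).card
        + ((Finset.univ.filter (fun k : Fin n => v k = c)).image u).card := by
  rw [Aeq hu hvf]
  rw [← Finset.card_union_of_disjoint (by rw [Finset.disjoint_filter]; intro x _ h1 h2; omega)]
  congr 1
  rw [← Finset.filter_or]
  apply Finset.filter_congr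
  intro x _
  constructor
  · intro h; omega
  · intro h; omega

lemma a_one (hu : PackedWord u s) (hvf : ∀ i, v i = f (u i)) (hv1 : ∀ i, 1 ≤ v i) :
    ((Finset.Icc 1 s).filter (fun x => f x < 1)).card = 0 := by
  rw [Finset.card_eq_zero, Finset.filter_eq_empty_iff]
  intro x hx
  obtain ⟨i, rfl⟩ := hu.2 x hx
  have := hv1 i
  rw [hvf i] at this
  omega

lemma sup_eq (c : ℕ) (hne : (Finset.univ.filter (fun k : Fin n => v k = c)).Nonempty) :
    (Finset.univ.filter (fun k : Fin n => v k = c)).sup (packRestrict v c u)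
      = ((Finset.univ.filter (fun k : Fin n => v k = c)).image u).card := by
  set B := Finset.univ.filter (fun k : Fin n => v k = c) with hB
  set A := B.image u with hA
  apply le_antisymm
  · apply Finset.sup_le
    intro j hj
    have hjc : v j = c := (Finset.mem_filter.1 hj).2
    rw [packRestrict, if_pos hjc]
    have : u j ∈ A := Finset.mem_image.2 ⟨j, hj, rfl⟩
    exact (Finset.mem_Icc.1 (rank_mem A this)).2
  · have hcard : 1 ≤ A.card := by
      apply Finset.card_pos.2
      exact hne.image u
    obtain ⟨x, hxA, hx⟩ := rank_surj A (Finset.mem_Icc.2 ⟨hcard, le_refl _⟩)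
    obtain ⟨j, hj, rfl⟩ := Finset.mem_image.1 hxA
    have hjc : v j = c := (Finset.mem_filter.1 hj).2
    calc A.card = packRestrict v c u j := by rw [packRestrict, if_pos hjc, hx]
    _ ≤ _ := Finset.le_sup hj

def aFun (M : ℕ → ℕ) (c : ℕ) : ℕ := ∑ d ∈ Finset.Ico 1 c, M d

lemma aFun_succ (M : ℕ → ℕ) {c : ℕ} (hc : 1 ≤ c) : aFun M (c + 1) = aFun M c + M c :=
  Finset.sum_Ico_succ_top hc _

lemma aFun_mono (M : ℕ → ℕ) : Monotone (aFun M) := by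
  intro c c' h
  exact Finset.sum_le_sum_of_subset (Finset.Ico_subset_Ico le_rfl h)

lemma aFun_exists (M : ℕ → ℕ) : ∀ c x, 1 ≤ x → x ≤ aFun M (c + 1) →
    ∃ e, 1 ≤ e ∧ e ≤ c ∧ aFun M e < x ∧ x ≤ aFun M (e + 1) := by
  intro c
  induction c with
  | zero =>
    intro x h1 h2
    have : aFun M (0 + 1) = 0 := by simp [aFun]
    omega
  | succ c ih =>
    intro x h1 h2
    by_cases h : x ≤ aFun M (c + 1)
    · obtain ⟨e, he⟩ := ih x h1 h
      exact ⟨e, he.1, by omega, he.2.2⟩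
    · exact ⟨c + 1, by omega, le_refl _, by omega, h2⟩

lemma aFun_fval (M : ℕ → ℕ) (c t r : ℕ) (h1 : 1 ≤ c) (hcr : c ≤ r) (ht1 : 1 ≤ t)
    (htM : t ≤ M c) :
    ((Finset.Icc 1 r).filter (fun d => aFun M d < aFun M c + t)).card = c := by
  have : (Finset.Icc 1 r).filter (fun d => aFun M d < aFun M c + t) = Finset.Icc 1 c := by
    ext d
    simp only [mem_filter, mem_Icc]
    constructor
    · rintro ⟨⟨hd1, hdr⟩, hd⟩
      refine ⟨hd1, ?_⟩
      by_contra hc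
      have h2 : aFun M (c + 1) ≤ aFun M d := aFun_mono M (by omega)
      have h3 := aFun_succ M h1
      omega
    · rintro ⟨hd1, hdc⟩
      have := aFun_mono M hdc
      exact ⟨⟨hd1, by omega⟩, by omega⟩
  rw [this, Nat.card_Icc]
  omega


/-- The proper packed colorings `u` of `G` refining `v` are in bijection with tuples
`(w_1,…,w_r)` of proper packed colorings of the induced subgraphs `G_i(v)`, the
bijection being given by packed restriction. -/
theorem stmt1 {n r : ℕ} (G : SimpleGraph (Fin n)) (v : Fin n → ℕ) (hv : PackedWord v r) :
    Set.BijOn (fun (u : Fin n → ℕ) (i : Fin r) => packRestrict v ((i : ℕ) + 1) u)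
      {u | (∃ s, PackedWord u s) ∧ ProperColoring G u ∧ Refines u v}
      {W : Fin r → Fin n → ℕ | ∀ i : Fin r,
        (∀ j, v j ≠ (i : ℕ) + 1 → W i j = 0) ∧
        (∀ j k, G.Adj j k → v j = (i : ℕ) + 1 → v k = (i : ℕ) + 1 → W i j ≠ W i k) ∧
        ∃ m, (∀ j, v j = (i : ℕ) + 1 → W i j ∈ Finset.Icc 1 m) ∧
          ∀ x ∈ Finset.Icc 1 m, ∃ j, v j = (i : ℕ) + 1 ∧ W i j = x} := by
  have hv1 : ∀ i, 1 ≤ v i := fun i => (Finset.mem_Icc.1 (hv.1 i)).1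
  have hvr : ∀ i, v i ≤ r := fun i => (Finset.mem_Icc.1 (hv.1 i)).2
  have hblock : ∀ c, 1 ≤ c → c ≤ r →
      (Finset.univ.filter (fun k : Fin n => v k = c)).Nonempty := by
    intro c h1 h2
    obtain ⟨i, hi⟩ := hv.2 c (Finset.mem_Icc.2 ⟨h1, h2⟩)
    exact ⟨i, Finset.mem_filter.2 ⟨Finset.mem_univ i, hi⟩⟩
  refine ⟨?_, ?_, ?_⟩
  · -- MapsTo
    rintro u ⟨⟨s, hu⟩, hp, f, hf, hvf⟩
    intro i
    have hcr : (i : ℕ) + 1 ≤ r := i.isLt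
    refine ⟨?_, ?_, ?_⟩
    · intro j hj
      simp only [packRestrict, if_neg hj]
    · intro j k hadj hj hk heq
      simp only [packRestrict, if_pos hj, if_pos hk] at heq
      have huj : u j ∈ (Finset.univ.filter (fun l : Fin n => v l = (i : ℕ) + 1)).image u :=
        Finset.mem_image.2 ⟨j, Finset.mem_filter.2 ⟨Finset.mem_univ j, hj⟩, rfl⟩
      have huk : u k ∈ (Finset.univ.filter (fun l : Fin n => v l = (i : ℕ) + 1)).image u :=
        Finset.mem_image.2 ⟨k, Finset.mem_filter.2 ⟨Finset.mem_univ k, hk⟩, rfl⟩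
      exact hp j k hadj (rank_injOn _ huj huk heq)
    · refine ⟨((Finset.univ.filter (fun k : Fin n => v k = (i : ℕ) + 1)).image u).card, ?_, ?_⟩
      · intro j hj
        simp only [packRestrict, if_pos hj]
        exact rank_mem _ (Finset.mem_image.2 ⟨j, Finset.mem_filter.2 ⟨Finset.mem_univ j, hj⟩, rfl⟩)
      · intro x hx
        obtain ⟨y, hyA, hy⟩ := rank_surj _ hx
        obtain ⟨j, hj, rfl⟩ := Finset.mem_image.1 hyA
        have hjc : v j = (i : ℕ) + 1 := (Finset.mem_filter.1 hj).2
        refine ⟨j, hjc, ?_⟩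
        simp only [packRestrict, if_pos hjc]
        exact hy
  · -- InjOn
    rintro u₁ ⟨⟨s₁, hu₁⟩, hp₁, f₁, hf₁, hvf₁⟩ u₂ ⟨⟨s₂, hu₂⟩, hp₂, f₂, hf₂, hvf₂⟩ heq
    have hW : ∀ c, 1 ≤ c → c ≤ r → packRestrict v c u₁ = packRestrict v c u₂ := by
      intro c h1 h2
      have h := congrFun heq ⟨c - 1, by omega⟩
      simp only at h
      have hcc : c - 1 + 1 = c := by omega
      rw [hcc] at h
      exact h
    have ha : ∀ c, c ≤ r + 1 →
        ((Finset.Icc 1 s₁).filter (fun x => f₁ x < c)).card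
          = ((Finset.Icc 1 s₂).filter (fun x => f₂ x < c)).card := by
      intro c
      induction c with
      | zero => intro _; simp
      | succ c ih =>
        intro hcr1
        rcases Nat.eq_zero_or_pos c with rfl | hc1
        · rw [show (0:ℕ) + 1 = 1 from rfl, a_one hu₁ hvf₁ hv1, a_one hu₂ hvf₂ hv1]
        · rw [a_succ hu₁ hvf₁ c, a_succ hu₂ hvf₂ c, ih (by omega)]
          congr 1
          rw [← sup_eq (u := u₁) c (hblock c hc1 (by omega)),
            ← sup_eq (u := u₂) c (hblock c hc1 (by omega)), hW c hc1 (by omega)]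
    funext j
    have d₁ := decomp hu₁ hf₁ hvf₁ j
    have d₂ := decomp hu₂ hf₂ hvf₂ j
    rw [hW (v j) (hv1 j) (hvr j), ha (v j) (by have := hvr j; omega)] at d₁
    omega
  · -- SurjOn
    intro W hW
    simp only [Set.mem_setOf_eq] at hW
    set m : Fin r → ℕ := fun i => Classical.choose (hW i).2.2 with hmdef
    have hm : ∀ i : Fin r, (∀ j, v j = (i:ℕ)+1 → W i j ∈ Finset.Icc 1 (m i)) ∧
        ∀ x ∈ Finset.Icc 1 (m i), ∃ j, v j = (i:ℕ)+1 ∧ W i j = x :=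
      fun i => Classical.choose_spec (hW i).2.2
    set M : ℕ → ℕ := fun c => if h : c - 1 < r then m ⟨c - 1, h⟩ else 0 with hMdef
    have hM : ∀ i : Fin r, M ((i:ℕ)+1) = m i := by
      intro i
      rw [hMdef]
      exact dif_pos i.isLt
    have hlt : ∀ j : Fin n, v j - 1 < r := fun j => by have := hv1 j; have := hvr j; omega
    set idx : Fin n → Fin r := fun j => ⟨v j - 1, hlt j⟩ with hidxdef
    have hidx1 : ∀ j, ((idx j : ℕ)) + 1 = v j := by
      intro j
      simp only [hidxdef]
      have := hv1 j
      omega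
    have hidx2 : ∀ (j : Fin n) (i : Fin r), v j = (i:ℕ)+1 → idx j = i := by
      intro j i h
      apply Fin.ext
      simp only [hidxdef]
      omega
    set u : Fin n → ℕ := fun j => aFun M (v j) + W (idx j) j with hudef
    have hWb : ∀ j, 1 ≤ W (idx j) j ∧ W (idx j) j ≤ M (v j) := by
      intro j
      have h1 := (hm (idx j)).1 j (hidx1 j).symm
      rw [Finset.mem_Icc] at h1
      refine ⟨h1.1, ?_⟩
      rw [← hidx1 j, hM (idx j)]
      exact h1.2
    have hF : ∀ j, ((Finset.Icc 1 r).filter (fun d => aFun M d < u j)).card = v j := by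
      intro j
      simp only [hudef]
      exact aFun_fval M (v j) _ r (hv1 j) (hvr j) (hWb j).1 (hWb j).2
    have hFmono : Monotone (fun x => ((Finset.Icc 1 r).filter (fun d => aFun M d < x)).card) := by
      intro x y hxy
      apply Finset.card_le_card
      intro d hd
      rw [Finset.mem_filter] at *
      exact ⟨hd.1, lt_of_lt_of_le hd.2 hxy⟩
    have hmem : ∀ j, u j ∈ Finset.Icc 1 (aFun M (r+1)) := by
      intro j
      rw [Finset.mem_Icc]
      have h1 := (hWb j).1
      have h2 := (hWb j).2
      have h3 : aFun M (v j + 1) ≤ aFun M (r + 1) := aFun_mono M (by have := hvr j; omega)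
      have h4 := aFun_succ M (hv1 j)
      simp only [hudef]
      omega
    have hsurj : ∀ x ∈ Finset.Icc 1 (aFun M (r+1)), ∃ j, u j = x := by
      intro x hx
      rw [Finset.mem_Icc] at hx
      obtain ⟨e, he1, her, hltx, hlex⟩ := aFun_exists M r x hx.1 hx.2
      have hie : ((⟨e - 1, by omega⟩ : Fin r) : ℕ) + 1 = e := by simp; omega
      have hMe : M e = m ⟨e - 1, by omega⟩ := by
        rw [hMdef]
        exact dif_pos (by omega)
      have ht : x - aFun M e ∈ Finset.Icc 1 (m ⟨e - 1, by omega⟩) := by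
        rw [Finset.mem_Icc, ← hMe]
        have := aFun_succ M he1
        omega
      obtain ⟨j, hj, hWj⟩ := (hm ⟨e - 1, by omega⟩).2 _ ht
      rw [hie] at hj
      refine ⟨j, ?_⟩
      have hix : idx j = ⟨e - 1, by omega⟩ := hidx2 j _ (by rw [hie]; exact hj)
      simp only [hudef, hix, hWj, hj]
      omega
    have hprop : ProperColoring G u := by
      intro j k hadj
      rcases lt_trichotomy (v j) (v k) with h | h | h
      · have h2 : aFun M (v j + 1) ≤ aFun M (v k) := aFun_mono M (by omega)
        have h3 := aFun_succ M (hv1 j)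
        have b1 := (hWb j)
        have b2 := (hWb k)
        simp only [hudef]
        omega
      · have hik : idx j = idx k := Fin.ext (by simp only [hidxdef]; omega)
        have hWne := (hW (idx k)).2.1 j k hadj (by rw [← hik]; exact (hidx1 j).symm)
          (hidx1 k).symm
        simp only [hudef, h, hik]
        intro hE
        exact hWne (by omega)
      · have h2 : aFun M (v k + 1) ≤ aFun M (v j) := aFun_mono M (by omega)
        have h3 := aFun_succ M (hv1 k)
        have b1 := (hWb j)
        have b2 := (hWb k)
        simp only [hudef]
        omega
    refine ⟨u, ⟨⟨aFun M (r+1), hmem, hsurj⟩, hprop,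
      ⟨fun x => ((Finset.Icc 1 r).filter (fun d => aFun M d < x)).card, hFmono,
        fun j => (hF j).symm⟩⟩, ?_⟩
    funext i j
    by_cases hj : v j = (i : ℕ) + 1
    · simp only [packRestrict, if_pos hj]
      have hA : (Finset.univ.filter (fun k : Fin n => v k = (i:ℕ)+1)).image u
          = (Finset.Icc 1 (m i)).image (fun t => aFun M ((i:ℕ)+1) + t) := by
        ext x
        simp only [Finset.mem_image, Finset.mem_filter, Finset.mem_univ, true_and]
        constructor
        · rintro ⟨k, hk, rfl⟩
          refine ⟨W i k, (hm i).1 k hk, ?_⟩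
          have hik := hidx2 k i hk
          simp only [hudef, hik, hk]
        · rintro ⟨t, ht, rfl⟩
          obtain ⟨k, hk, hWk⟩ := (hm i).2 t ht
          refine ⟨k, hk, ?_⟩
          have hik := hidx2 k i hk
          simp only [hudef, hik, hk, hWk]
      rw [hA]
      have hWj : W i j ∈ Finset.Icc 1 (m i) := (hm i).1 j hj
      rw [Finset.mem_Icc] at hWj
      have huj : u j = aFun M ((i:ℕ)+1) + W i j := by
        have hik := hidx2 j i hj
        simp only [hudef, hik, hj]
      have hfilt : ((Finset.Icc 1 (m i)).image (fun t => aFun M ((i:ℕ)+1) + t)).filter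
            (fun x => x ≤ u j)
          = (Finset.Icc 1 (W i j)).image (fun t => aFun M ((i:ℕ)+1) + t) := by
        ext x
        simp only [Finset.mem_filter, Finset.mem_image, Finset.mem_Icc]
        constructor
        · rintro ⟨⟨t, ht, rfl⟩, hle⟩
          rw [huj] at hle
          exact ⟨t, ⟨ht.1, by omega⟩, rfl⟩
        · rintro ⟨t, ht, rfl⟩
          refine ⟨⟨t, ⟨ht.1, by omega⟩, rfl⟩, by rw [huj]; omega⟩
      rw [hfilt, Finset.card_image_of_injective _ (add_right_injective _), Nat.card_Icc]
      omega
    · simp only [packRestrict, if_neg hj]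
      exact ((hW i).1 j hj).symm
end

section
/- Let G be a Dyck graph on n vertices, i.e., a graph whose edges (i,j) with i<j satisfy the property that (i,j) ∈ E and i ≤ i' < j' ≤ j with (i',j') a pair with i'<j' implies (i',j') ∈ E (equivalently, the edge set is {(i,j) : i < j ≤ h(i)} for a Hessenberg function h). For each vertex j, let a_j denote the number of edges (i,j) with i < j. Then Σ_{c ∈ [2]^n} t^{asc_G(c)} q^{m_1(c)} (−1)^{m_2(c)} t^{e(G_2(c))} = Π_{j=1}^n (q − t^{a_j}), where m_i(c) is the number of letters i in c, asc_G(c) counts edges (i,j) with i<j and c_i < c_j, and e(G_2(c)) is the number of edges of the induced subgraph of G on positions where c takes value 2. -/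
open Finset

/-- For a Dyck graph `G` on `{0,…,n-1}` (0-indexed version of `{1,…,n}`), with `a j` the
number of edges `(i,j)` with `i < j`, the signed generating sum over 2-colorings
`c ∈ [2]^n` (color `1` ↔ `c i = 0`, color `2` ↔ `c i = 1`) of
`t^{asc_G(c)} q^{m_1(c)} (-1)^{m_2(c)} t^{e(G_2(c))}` equals `∏_j (q - t^{a_j})`,
in `ℤ[q,t]` with `q = X 0`, `t = X 1`. -/
theorem stmt2 {n : ℕ} (G : SimpleGraph (Fin n)) [DecidableRel G.Adj]
    (hDyck : ∀ i j i' j' : Fin n, i < j → G.Adj i j → i ≤ i' → i' < j' → j' ≤ j →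
      G.Adj i' j')
    (a : Fin n → ℕ)
    (ha : ∀ j, a j = (univ.filter (fun i => i < j ∧ G.Adj i j)).card) :
    (∑ c : Fin n → Fin 2,
      (MvPolynomial.X 1 : MvPolynomial (Fin 2) ℤ) ^
          ((univ.filter (fun p : Fin n × Fin n =>
            p.1 < p.2 ∧ G.Adj p.1 p.2 ∧ c p.1 < c p.2)).card)
        * (MvPolynomial.X 0) ^ ((univ.filter (fun i => c i = 0)).card)
        * (-1) ^ ((univ.filter (fun i => c i = 1)).card)
        * (MvPolynomial.X 1) ^
          ((univ.filter (fun p : Fin n × Fin n =>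
            p.1 < p.2 ∧ G.Adj p.1 p.2 ∧ c p.1 = 1 ∧ c p.2 = 1)).card))
    = ∏ j : Fin n,
        ((MvPolynomial.X 0 : MvPolynomial (Fin 2) ℤ) - (MvPolynomial.X 1) ^ (a j)) := by
  classical
  set q : MvPolynomial (Fin 2) ℤ := MvPolynomial.X 0 with hq
  set t : MvPolynomial (Fin 2) ℤ := MvPolynomial.X 1 with ht
  -- equivalence between colorings and subsets
  let e : (Fin n → Fin 2) ≃ Finset (Fin n) :=
    { toFun := fun c => univ.filter (fun i => c i = 1)
      invFun := fun S => fun i => if i ∈ S then 1 else 0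
      left_inv := by
        intro c; funext i; by_cases h : c i = 1 <;> simp [h] <;> omega
      right_inv := by
        intro S; ext i; by_cases h : i ∈ S <;> simp [h] }
  simp only [show ∀ j : Fin n, q - t ^ a j = -(t ^ a j) + q from fun j => by ring]
  rw [Finset.prod_add]
  rw [Finset.powerset_univ]
  rw [← Equiv.sum_comp e]
  apply Finset.sum_congr rfl
  intro c _
  set S : Finset (Fin n) := univ.filter (fun i => c i = 1) with hS
  have hzero : univ.filter (fun i => c i = 0) = univ \ S := by
    rw [hS]; ext i; simp; omega
  have hA : (univ.filter (fun p : Fin n × Fin n =>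
      p.1 < p.2 ∧ G.Adj p.1 p.2 ∧ c p.1 < c p.2)) =
      (univ.filter (fun p : Fin n × Fin n =>
      p.1 < p.2 ∧ G.Adj p.1 p.2 ∧ c p.2 = 1 ∧ ¬ c p.1 = 1)) := by
    ext p; simp only [mem_filter, mem_univ, true_and]
    constructor
    · rintro ⟨h1, h2, h3⟩; exact ⟨h1, h2, by omega, by omega⟩
    · rintro ⟨h1, h2, h3, h4⟩; exact ⟨h1, h2, by omega⟩
  have hB : (univ.filter (fun p : Fin n × Fin n =>
      p.1 < p.2 ∧ G.Adj p.1 p.2 ∧ c p.1 = 1 ∧ c p.2 = 1)) =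
      (univ.filter (fun p : Fin n × Fin n =>
      p.1 < p.2 ∧ G.Adj p.1 p.2 ∧ c p.2 = 1 ∧ c p.1 = 1)) := by
    ext p; simp only [mem_filter, mem_univ, true_and]; tauto
  have hdisj : Disjoint
      (univ.filter (fun p : Fin n × Fin n =>
      p.1 < p.2 ∧ G.Adj p.1 p.2 ∧ c p.2 = 1 ∧ ¬ c p.1 = 1))
      (univ.filter (fun p : Fin n × Fin n =>
      p.1 < p.2 ∧ G.Adj p.1 p.2 ∧ c p.2 = 1 ∧ c p.1 = 1)) := by
    rw [Finset.disjoint_filter]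
    rintro p _ ⟨_, _, _, h⟩ ⟨_, _, _, h'⟩; exact h h'
  have hunion : (univ.filter (fun p : Fin n × Fin n =>
      p.1 < p.2 ∧ G.Adj p.1 p.2 ∧ c p.2 = 1 ∧ ¬ c p.1 = 1)) ∪
      (univ.filter (fun p : Fin n × Fin n =>
      p.1 < p.2 ∧ G.Adj p.1 p.2 ∧ c p.2 = 1 ∧ c p.1 = 1)) =
      univ.filter (fun p : Fin n × Fin n =>
      p.1 < p.2 ∧ G.Adj p.1 p.2 ∧ c p.2 = 1) := by
    rw [← Finset.filter_or]
    apply Finset.filter_congr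
    intro p _; tauto
  set C : Finset (Fin n × Fin n) := univ.filter (fun p : Fin n × Fin n =>
      p.1 < p.2 ∧ G.Adj p.1 p.2 ∧ c p.2 = 1) with hC
  have hsum : (univ.filter (fun p : Fin n × Fin n =>
        p.1 < p.2 ∧ G.Adj p.1 p.2 ∧ c p.1 < c p.2)).card +
      (univ.filter (fun p : Fin n × Fin n =>
        p.1 < p.2 ∧ G.Adj p.1 p.2 ∧ c p.1 = 1 ∧ c p.2 = 1)).card = C.card := by
    rw [hA, hB, ← Finset.card_union_of_disjoint hdisj, hunion]
  have hCcard : C.card = ∑ j ∈ S, a j := by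
    rw [Finset.card_eq_sum_card_fiberwise (f := Prod.snd) (t := S)
      (fun p hp => by
        simp only [hC, Finset.mem_coe, mem_filter, mem_univ, true_and] at hp
        simp [hS, hp.2.2])]
    apply Finset.sum_congr rfl
    intro j hj
    rw [ha j]
    have hcj : c j = 1 := by simpa [hS] using hj
    have himg : C.filter (fun p => p.2 = j) =
        (univ.filter (fun i => i < j ∧ G.Adj i j)).image (fun i => (i, j)) := by
      ext p
      simp only [hC, mem_filter, mem_univ, true_and, mem_image]
      constructor
      · rintro ⟨⟨h1, h2, h3⟩, h4⟩
        exact ⟨p.1, ⟨h4 ▸ h1, h4 ▸ h2⟩, by rw [← h4]⟩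
      · rintro ⟨i, ⟨hi1, hi2⟩, rfl⟩
        exact ⟨⟨hi1, hi2, hcj⟩, rfl⟩
    rw [himg, Finset.card_image_of_injective _
      (fun x y h => by simpa using congrArg Prod.fst h)]
  -- now compute both sides
  have heS : e c = S := rfl
  rw [heS]
  have h1 : ∏ j ∈ S, -(t ^ a j) = (-1) ^ S.card * t ^ (∑ j ∈ S, a j) := by
    rw [← Finset.prod_pow_eq_pow_sum, ← Finset.prod_const, ← Finset.prod_mul_distrib]
    exact Finset.prod_congr rfl fun j _ => by ring
  rw [h1, hzero, Finset.prod_const, ← hCcard, ← hsum, pow_add]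
  ring
end

section
/- A sequence a = (a_1,…,a_n) of nonnegative integers is the Lehmer code of a 312-avoiding permutation of {1,…,n} if and only if a_i ≤ n − i for all i and a_{i+1} ≥ a_i − 1 for all i (equivalently, a_i ≤ a_{i+1} + 1), where the Lehmer code of σ is defined by c_i(σ) = #{j > i : σ_j < σ_i}. -/
/-- `σ` avoids the pattern 312. -/
def Avoids312 {n : ℕ} (σ : Equiv.Perm (Fin n)) : Prop :=
  ¬ ∃ i j k : Fin n, i < j ∧ j < k ∧ σ j < σ k ∧ σ k < σ i

/-- Lehmer code of `σ`: `c_i = #{j > i : σ j < σ i}`. -/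
def lehmer {n : ℕ} (σ : Equiv.Perm (Fin n)) (i : Fin n) : ℕ :=
  (Finset.univ.filter (fun j => i < j ∧ σ j < σ i)).card

private lemma lehmer_le {n : ℕ} (σ : Equiv.Perm (Fin n)) (i : Fin n) :
    lehmer σ i ≤ n - 1 - (i : ℕ) := by
  have h1 : (Finset.univ.filter (fun j => i < j ∧ σ j < σ i)) ⊆ Finset.Ioi i := by
    intro l hl
    simp only [Finset.mem_filter] at hl
    exact Finset.mem_Ioi.mpr hl.2.1
  calc lehmer σ i ≤ (Finset.Ioi i).card := Finset.card_le_card h1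
    _ = n - 1 - (i : ℕ) := Fin.card_Ioi i

private lemma code_consec {n : ℕ} (σ : Equiv.Perm (Fin n)) (hav : Avoids312 σ)
    (i j : Fin n) (hj : (j : ℕ) = (i : ℕ) + 1) : lehmer σ i ≤ lehmer σ j + 1 := by
  have hij : i < j := by rw [Fin.lt_def]; omega
  rcases lt_or_ge (σ i) (σ j) with hlt | hle
  · have hsub : (Finset.univ.filter (fun l => i < l ∧ σ l < σ i)) ⊆
        (Finset.univ.filter (fun l => j < l ∧ σ l < σ j)) := by
      intro l hl
      simp only [Finset.mem_filter, Finset.mem_univ, true_and] at hl ⊢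
      have hlj : l ≠ j := by
        intro h; subst h; exact absurd hl.2 (lt_asymm hlt)
      have : j < l := by
        rw [Fin.lt_def] at hl ⊢
        have : (l : ℕ) ≠ (j : ℕ) := fun h => hlj (Fin.ext h)
        omega
      exact ⟨this, lt_trans hl.2 hlt⟩
    have := Finset.card_le_card hsub
    unfold lehmer; omega
  · have hne : σ j ≠ σ i := fun h => absurd (σ.injective h) (Fin.ne_of_lt hij).symm
    have hji : σ j < σ i := lt_of_le_of_ne hle hne
    have hsub : (Finset.univ.filter (fun l => i < l ∧ σ l < σ i)) ⊆
        insert j (Finset.univ.filter (fun l => j < l ∧ σ l < σ j)) := by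
      intro l hl
      simp only [Finset.mem_filter, Finset.mem_univ, true_and, Finset.mem_insert] at hl ⊢
      by_cases hlj : l = j
      · exact Or.inl hlj
      · refine Or.inr ⟨?_, ?_⟩
        · rw [Fin.lt_def] at hl ⊢
          have : (l : ℕ) ≠ (j : ℕ) := fun h => hlj (Fin.ext h)
          omega
        · by_contra hge
          push_neg at hge
          have hne2 : σ j ≠ σ l := fun h => hlj (σ.injective h).symm
          have : σ j < σ l := lt_of_le_of_ne hge hne2
          have hjl : j < l := by
            rw [Fin.lt_def] at hl ⊢
            have : (l : ℕ) ≠ (j : ℕ) := fun h => hlj (Fin.ext h)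
            omega
          exact hav ⟨i, j, l, hij, hjl, this, hl.2⟩
    have h1 := Finset.card_le_card hsub
    have h2 := Finset.card_insert_le j (Finset.univ.filter (fun l => j < l ∧ σ l < σ j))
    unfold lehmer; omega

private lemma avoids_of_code {n : ℕ} (σ : Equiv.Perm (Fin n))
    (h : ∀ i j : Fin n, (j : ℕ) = (i : ℕ) + 1 → lehmer σ i ≤ lehmer σ j + 1) :
    Avoids312 σ := by
  rintro ⟨i, j, k, hij, hjk, h1, h2⟩
  have key : ∀ d : ℕ, ∀ i j k : Fin n, (j : ℕ) - (i : ℕ) = d → i < j → j < k →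
      σ j < σ k → σ k < σ i → False := by
    intro d
    induction d using Nat.strong_induction_on with
    | _ d ih =>
      intro i j k hd hij hjk h1 h2
      by_cases hcons : (j : ℕ) = (i : ℕ) + 1
      · -- contradiction with the code condition
        have hcode := h i j hcons
        set S := Finset.univ.filter (fun l => j < l ∧ σ l < σ j) with hS
        set T := Finset.univ.filter (fun l => i < l ∧ σ l < σ i) with hT
        have hjS : j ∉ S := by simp [hS]
        have hkS : k ∉ S := by
          simp only [hS, Finset.mem_filter, Finset.mem_univ, true_and, not_and]
          intro _; exact lt_asymm h1
        have hjk' : j ≠ k := Fin.ne_of_lt hjk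
        have hsub : insert j (insert k S) ⊆ T := by
          intro l hl
          simp only [Finset.mem_insert, hS, hT, Finset.mem_filter, Finset.mem_univ,
            true_and] at hl ⊢
          rcases hl with rfl | rfl | hl
          · exact ⟨hij, lt_trans h1 h2⟩
          · exact ⟨lt_trans hij hjk, h2⟩
          · exact ⟨lt_trans hij hl.1, lt_trans hl.2 (lt_trans h1 h2)⟩
        have hcard : (insert j (insert k S)).card = S.card + 2 := by
          rw [Finset.card_insert_of_notMem (by
              simp only [Finset.mem_insert, not_or]; exact ⟨hjk', hjS⟩),
            Finset.card_insert_of_notMem hkS]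
        have := Finset.card_le_card hsub
        have hlS : lehmer σ j = S.card := rfl
        have hlT : lehmer σ i = T.card := rfl
        omega
      · -- find a closer pattern
        have hij' : (i : ℕ) < j := hij
        have hi1 : (i : ℕ) + 1 < n := lt_trans (by omega) j.isLt
        set i' : Fin n := ⟨(i : ℕ) + 1, hi1⟩ with hi'
        have hii' : i < i' := by rw [Fin.lt_def]; simp [hi']
        have hi'j : i' < j := by rw [Fin.lt_def]; simp [hi']; omega
        rcases lt_trichotomy (σ i') (σ k) with hc | hc | hc
        · -- pattern (i, i', k)
          exact ih 1 (by omega) i i' k (by simp [hi']) hii'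
            (lt_trans hi'j hjk) hc h2
        · exact absurd (σ.injective hc) (Fin.ne_of_lt (lt_trans hi'j hjk))
        · -- pattern (i', j, k)
          exact ih ((j : ℕ) - ((i : ℕ) + 1)) (by omega) i' j k (by simp [hi'])
            hi'j hjk h1 hc
  exact key _ i j k rfl hij hjk h1 h2

private lemma succAbove_lt_self_iff {n : ℕ} (v : Fin (n + 1)) (x : Fin n) :
    v.succAbove x < v ↔ (x : ℕ) < (v : ℕ) := by
  rw [Fin.succAbove]
  split_ifs with h <;>
    simp only [Fin.lt_def, Fin.coe_castSucc, Fin.val_succ, not_lt] at h ⊢ <;> omega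
  --

private lemma decode : ∀ (n : ℕ) (a : Fin n → ℕ), (∀ i, a i + (i : ℕ) + 1 ≤ n) →
    ∃ σ : Equiv.Perm (Fin n), ∀ i, lehmer σ i = a i := by
  intro n
  induction n with
  | zero => exact fun a _ => ⟨1, fun i => i.elim0⟩
  | succ n ih =>
    intro a ha
    obtain ⟨τ, hτ⟩ := ih (fun i => a i.succ)
      (fun i => by
        have := ha i.succ; simp only [Fin.val_succ] at this
        show a i.succ + (i : ℕ) + 1 ≤ n; omega)
    have hv : a 0 < n + 1 := by have := ha 0; simp at this; omega
    set v : Fin (n + 1) := ⟨a 0, hv⟩ with hvdef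
    set σ : Equiv.Perm (Fin (n + 1)) :=
      (finSuccEquiv n).trans (τ.optionCongr.trans (finSuccEquiv' v).symm) with hσ
    have hσ0 : σ 0 = v := by
      simp [hσ, finSuccEquiv_zero]
    have hσs : ∀ i : Fin n, σ i.succ = v.succAbove (τ i) := by
      intro i
      simp [hσ, finSuccEquiv_succ, finSuccEquiv'_symm_some]
    refine ⟨σ, fun i => ?_⟩
    induction i using Fin.cases with
    | zero =>
      rw [lehmer, Finset.card_filter, Fin.sum_univ_succ]
      have hterm : ∀ j : Fin n,
          (if (0 : Fin (n+1)) < j.succ ∧ σ j.succ < σ 0 then (1:ℕ) else 0) =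
          (if ((τ j : ℕ) < a 0) then 1 else 0) := by
        intro j
        simp only [hσs, hσ0, Fin.succ_pos, true_and, succAbove_lt_self_iff]
        rfl
      rw [Finset.sum_congr rfl (fun j _ => hterm j)]
      rw [if_neg (by simp), zero_add]
      rw [← Equiv.sum_comp τ.symm (fun x : Fin n => if (τ x : ℕ) < a 0 then (1:ℕ) else 0)]
      simp only [Equiv.apply_symm_apply]
      rw [← Finset.card_filter]
      -- card of {x : Fin n | x < a 0} = a 0 since a 0 ≤ n
      have han : a 0 ≤ n := by have := ha 0; omega
      have : (Finset.univ.filter (fun x : Fin n => (x : ℕ) < a 0)) =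
          Finset.univ.map (Fin.castLEEmb han) := by
        ext x
        simp only [Finset.mem_filter, Finset.mem_univ, true_and, Finset.mem_map,
          Fin.castLEEmb_apply]
        constructor
        · intro hx
          exact ⟨⟨(x : ℕ), hx⟩, by ext; simp⟩
        · rintro ⟨y, rfl⟩
          simpa [Fin.castLE] using y.isLt
      rw [this, Finset.card_map, Finset.card_univ, Fintype.card_fin]
    | succ i =>
      rw [lehmer, Finset.card_filter, Fin.sum_univ_succ]
      have h0 : ¬ (i.succ < (0 : Fin (n+1))) := by
        simp [Fin.lt_def]
      have hterm : ∀ j : Fin n,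
          (if i.succ < j.succ ∧ σ j.succ < σ i.succ then (1:ℕ) else 0) =
          (if (i < j ∧ τ j < τ i) then 1 else 0) := by
        intro j
        simp only [hσs, Fin.succ_lt_succ_iff, Fin.succAbove_lt_succAbove_iff]
      rw [Finset.sum_congr rfl (fun j _ => hterm j)]
      rw [if_neg (by simp [h0]), zero_add]
      rw [← Finset.card_filter]
      exact hτ i

/-- A sequence `a` is the Lehmer code of a 312-avoiding permutation of `{0,…,n−1}`
iff `a_i ≤ n − 1 − i` for all `i` and `a_i ≤ a_{i+1} + 1` for consecutive indices. -/
theorem stmt8 {n : ℕ} (a : Fin n → ℕ) :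
    (∃ σ : Equiv.Perm (Fin n), Avoids312 σ ∧ ∀ i, lehmer σ i = a i) ↔
    ((∀ i : Fin n, a i ≤ n - 1 - (i : ℕ)) ∧
      ∀ i j : Fin n, (j : ℕ) = (i : ℕ) + 1 → a i ≤ a j + 1) := by
  constructor
  · rintro ⟨σ, hav, hσ⟩
    refine ⟨fun i => hσ i ▸ lehmer_le σ i, fun i j hj => ?_⟩
    rw [← hσ i, ← hσ j]
    exact code_consec σ hav i j hj
  · rintro ⟨h1, h2⟩
    obtain ⟨σ, hσ⟩ := decode n a (fun i => by
      have := h1 i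
      have := i.isLt
      omega)
    refine ⟨σ, ?_, hσ⟩
    exact avoids_of_code σ (fun i j hj => by rw [hσ i, hσ j]; exact h2 i j hj)
end

section
/- Let σ be a 312-avoiding permutation whose Lehmer code a admits an admissible index i (meaning a_i ≥ 2, i = 1 or a_{i−1} ≤ a_i − 1, and a_{j−1} = 1 + a_j where j = i + a_i). Let σ' = s_{j−1}σ and let σ'' be obtained from σ' by exchanging the value j−1 with the leftmost smaller value to its right. Then the Lehmer code of σ' equals a with a_i replaced by a_i − 1, the Lehmer code of σ'' equals a with a_i replaced by a_i − 2, and both σ' and σ'' are 312-avoiding. -/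
lemma code_cond {n : ℕ} (τ : Equiv.Perm (Fin n)) (h : Avoids312 τ)
    (k : ℕ) (hk : k + 1 < n) :
    lehmer τ ⟨k, by omega⟩ ≤ lehmer τ ⟨k+1, hk⟩ + 1 := by
  by_contra hc
  push_neg at hc
  set K : Fin n := ⟨k, by omega⟩ with hK
  set K1 : Fin n := ⟨k+1, hk⟩ with hK1
  have hKK1 : K < K1 := by simp [hK, hK1, Fin.lt_def]
  set A := Finset.univ.filter (fun m => K < m ∧ τ m < τ K) with hA
  set B := Finset.univ.filter (fun m => K1 < m ∧ τ m < τ K1) with hB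
  have hcA : lehmer τ K = A.card := rfl
  have hcB : lehmer τ K1 = B.card := rfl
  have hsub : ¬ (A ⊆ insert K1 B) := by
    intro hs
    have h1 := Finset.card_le_card hs
    have h2 := Finset.card_insert_le K1 B
    omega
  obtain ⟨z, hzA, hzB⟩ := Finset.not_subset.mp hsub
  simp only [hA, Finset.mem_filter, Finset.mem_univ, true_and] at hzA
  simp only [Finset.mem_insert, hB, Finset.mem_filter, Finset.mem_univ, true_and] at hzB
  push_neg at hzB
  obtain ⟨hz1, hz2⟩ := hzA
  have hzne : z ≠ K1 := hzB.1
  have hzK1 : K1 < z := by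
    rw [Fin.lt_def] at hz1 ⊢
    have : (z : ℕ) ≠ k + 1 := fun hh => hzne (Fin.ext hh)
    simp only [hK, hK1] at hz1 ⊢
    omega
  have h1 : τ K1 < τ z :=
    lt_of_le_of_ne (hzB.2 hzK1) (fun hh => hzne (τ.injective hh.symm))
  exact h ⟨K, K1, z, hKK1, hzK1, h1, hz2⟩

lemma adj_case {n : ℕ} (τ : Equiv.Perm (Fin n))
    (h : ∀ (k : ℕ) (hk : k + 1 < n), lehmer τ ⟨k, by omega⟩ ≤ lehmer τ ⟨k+1, hk⟩ + 1)
    (x z : Fin n) (hx : (x : ℕ) + 1 < n) (h1 : (⟨x+1, hx⟩ : Fin n) < z)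
    (h2 : τ ⟨x+1, hx⟩ < τ z) (h3 : τ z < τ x) : False := by
  set y : Fin n := ⟨x+1, hx⟩ with hy
  set A := Finset.univ.filter (fun m => x < m ∧ τ m < τ x) with hA
  set B := Finset.univ.filter (fun m => y < m ∧ τ m < τ y) with hB
  have hcA : lehmer τ x = A.card := rfl
  have hcB : lehmer τ y = B.card := rfl
  have hxy : x < y := by simp [hy, Fin.lt_def]
  have hyzne : y ≠ z := ne_of_lt h1
  have hτyx : τ y < τ x := lt_trans h2 h3
  have hyB : y ∉ B := by simp [hB]
  have hzB : z ∉ insert y B := by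
    simp only [Finset.mem_insert, hB, Finset.mem_filter, Finset.mem_univ, true_and]
    push_neg
    exact ⟨hyzne.symm, fun _ => le_of_lt h2⟩
  have hsub : insert z (insert y B) ⊆ A := by
    intro m hm
    simp only [Finset.mem_insert, hB, Finset.mem_filter, Finset.mem_univ, true_and] at hm
    simp only [hA, Finset.mem_filter, Finset.mem_univ, true_and]
    rcases hm with rfl | rfl | ⟨hm1, hm2⟩
    · exact ⟨lt_trans hxy h1, h3⟩
    · exact ⟨hxy, hτyx⟩
    · exact ⟨lt_trans hxy hm1, lt_trans hm2 hτyx⟩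
  have hcard := Finset.card_le_card hsub
  rw [Finset.card_insert_of_notMem hzB, Finset.card_insert_of_notMem hyB] at hcard
  have hh := h x (by simpa [Fin.lt_def, hy] using hx)
  have hex : (⟨(x:ℕ), by omega⟩ : Fin n) = x := Fin.ext rfl
  rw [hex] at hh
  have : lehmer τ ⟨(x:ℕ)+1, hx⟩ = B.card := hcB
  omega

lemma avoids_of_code_cond {n : ℕ} (τ : Equiv.Perm (Fin n))
    (h : ∀ (k : ℕ) (hk : k + 1 < n), lehmer τ ⟨k, by omega⟩ ≤ lehmer τ ⟨k+1, hk⟩ + 1) :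
    Avoids312 τ := by
  rintro ⟨x, y, z, hxy, hyz, h1, h2⟩
  have key : ∀ g : ℕ, ∀ x y z : Fin n, (y : ℕ) ≤ (x : ℕ) + 1 + g →
      x < y → y < z → τ y < τ z → τ z < τ x → False := by
    intro g
    induction g with
    | zero =>
      intro x y z hg hxy hyz h1 h2
      have hyx : (y:ℕ) = (x:ℕ) + 1 := by
        have := (Fin.lt_def).mp hxy; omega
      have hx : (x:ℕ) + 1 < n := hyx ▸ y.isLt
      have : y = ⟨(x:ℕ)+1, hx⟩ := Fin.ext hyx
      subst this
      exact adj_case τ h x z hx hyz h1 h2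
    | succ g ih =>
      intro x y z hg hxy hyz h1 h2
      by_cases hcase : (y:ℕ) = (x:ℕ) + 1
      · have hx : (x:ℕ) + 1 < n := hcase ▸ y.isLt
        have : y = ⟨(x:ℕ)+1, hx⟩ := Fin.ext hcase
        subst this
        exact adj_case τ h x z hx hyz h1 h2
      · have hxylt := (Fin.lt_def).mp hxy
        have hyp : (y:ℕ) - 1 < n := by omega
        set y' : Fin n := ⟨(y:ℕ)-1, hyp⟩ with hy'
        have hxy' : x < y' := by rw [Fin.lt_def]; simp [hy']; omega
        have hy'y : y' < y := by rw [Fin.lt_def]; simp [hy']; omega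
        have hy'z : y' < z := lt_trans hy'y hyz
        have hy'zne : τ y' ≠ τ z := fun hh => (ne_of_lt hy'z) (τ.injective hh)
        rcases lt_or_gt_of_ne hy'zne with hlt | hgt
        · exact ih x y' z (by simp [hy']; omega) hxy' hy'z hlt h2
        · have hyy' : (y:ℕ) = (y':ℕ) + 1 := by simp [hy']; omega
          have hx2 : (y':ℕ) + 1 < n := hyy' ▸ y.isLt
          have hyeq : y = ⟨(y':ℕ)+1, hx2⟩ := Fin.ext hyy'
          rw [hyeq] at hyz h1
          exact adj_case τ h y' z hx2 hyz h1 hgt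
  exact key (y:ℕ) x y z (by omega) hxy hyz h1 h2

lemma lehmer_mul_swap {n : ℕ} (τ : Equiv.Perm (Fin n)) (q r : Fin n) (hqr : q < r)
    (hwv : τ r < τ q)
    (hmid : ∀ m : Fin n, q < m → τ m < τ q → τ m ≤ τ r) :
    (∀ k, k ≠ q → k ≠ r → lehmer (τ * Equiv.swap q r) k = lehmer τ k) ∧
    lehmer (τ * Equiv.swap q r) r = lehmer τ r ∧
    lehmer (τ * Equiv.swap q r) q + 1 = lehmer τ q := by
  have hqrne : q ≠ r := ne_of_lt hqr
  set e := Equiv.swap q r with he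
  have heq : e q = r := Equiv.swap_apply_left q r
  have her : e r = q := Equiv.swap_apply_right q r
  have hem : ∀ m, m ≠ q → m ≠ r → e m = m := fun m h1 h2 => Equiv.swap_apply_of_ne_of_ne h1 h2
  have hee : ∀ m, e (e m) = m := fun m => Equiv.swap_apply_self q r m
  have happ : ∀ m, (τ * e) m = τ (e m) := fun m => rfl
  refine ⟨?_, ?_, ?_⟩
  · -- (a)
    intro k hkq hkr
    have hek : e k = k := hem k hkq hkr
    unfold lehmer
    simp only [happ, hek]
    rcases lt_or_gt_of_ne hkq with hklt | hkgt
    · -- k < q : bijection by e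
      apply Finset.card_bij' (i := fun m _ => e m) (j := fun m _ => e m)
      · intro m hm
        simp only [Finset.mem_filter, Finset.mem_univ, true_and] at hm ⊢
        refine ⟨?_, hm.2⟩
        by_cases h1 : m = q
        · rw [h1, heq]; exact lt_trans hklt hqr
        by_cases h2 : m = r
        · rw [h2, her]; exact hklt
        · rw [hem m h1 h2]; exact hm.1
      · intro m hm
        simp only [Finset.mem_filter, Finset.mem_univ, true_and] at hm ⊢
        constructor
        · by_cases h1 : m = q
          · rw [h1, heq]; exact lt_trans hklt hqr
          by_cases h2 : m = r
          · rw [h2, her]; exact hklt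
          · rw [hem m h1 h2]; exact hm.1
        · rw [hee m]; exact hm.2
      · intro m _; exact hee m
      · intro m _; exact hee m
    · -- q < k
      congr 1
      apply Finset.filter_congr
      intro m _
      by_cases h1 : m = q
      · rw [h1, heq]
        constructor
        · rintro ⟨hh, _⟩; exact absurd hh (asymm hkgt)
        · rintro ⟨hh, _⟩; exact absurd hh (asymm hkgt)
      by_cases h2 : m = r
      · rw [h2, her]
        have hiff : (τ q < τ k ↔ τ r < τ k) := by
          constructor
          · exact fun hh => lt_trans hwv hh
          · intro hh
            rcases lt_trichotomy (τ k) (τ q) with h3 | h3 | h3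
            · exact absurd (lt_of_le_of_ne (hmid k hkgt h3) (fun hc => hkr (τ.injective hc))) (asymm hh)
            · exact absurd (τ.injective h3) hkq
            · exact h3
        constructor
        · rintro ⟨hh1, hh2⟩; exact ⟨hh1, hiff.mp hh2⟩
        · rintro ⟨hh1, hh2⟩; exact ⟨hh1, hiff.mpr hh2⟩
      · rw [hem m h1 h2]
  · -- (b) at r
    unfold lehmer
    simp only [happ, her]
    congr 1
    apply Finset.filter_congr
    intro m _
    by_cases h1 : m = q
    · rw [h1]
      constructor
      · rintro ⟨hh, _⟩; exact absurd (lt_trans hqr hh) (lt_irrefl q)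
      · rintro ⟨hh, _⟩; exact absurd (lt_trans hqr hh) (lt_irrefl q)
    by_cases h2 : m = r
    · rw [h2]
      constructor
      · rintro ⟨hh, _⟩; exact absurd hh (lt_irrefl r)
      · rintro ⟨hh, _⟩; exact absurd hh (lt_irrefl r)
    · rw [hem m h1 h2]
      constructor
      · rintro ⟨hh1, hh2⟩
        have := hmid m (lt_trans hqr hh1) hh2
        exact ⟨hh1, lt_of_le_of_ne this (fun hc => h2 (τ.injective hc))⟩
      · rintro ⟨hh1, hh2⟩; exact ⟨hh1, lt_trans hh2 hwv⟩
  · -- (c) at q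
    unfold lehmer
    simp only [happ, heq]
    have hkey : Finset.univ.filter (fun m => q < m ∧ τ m < τ q)
        = insert r (Finset.univ.filter (fun m => q < m ∧ τ (e m) < τ r)) := by
      ext m
      simp only [Finset.mem_insert, Finset.mem_filter, Finset.mem_univ, true_and]
      constructor
      · rintro ⟨hm1, hm2⟩
        by_cases h2 : m = r
        · exact Or.inl h2
        · refine Or.inr ⟨hm1, ?_⟩
          rw [hem m (ne_of_gt hm1) h2]
          exact lt_of_le_of_ne (hmid m hm1 hm2) (fun hc => h2 (τ.injective hc))
      · rintro (rfl | ⟨hm1, hm2⟩)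
        · exact ⟨hqr, hwv⟩
        · by_cases h2 : m = r
          · exact ⟨hm1, by rw [h2]; exact hwv⟩
          · rw [hem m (ne_of_gt hm1) h2] at hm2
            exact ⟨hm1, lt_trans hm2 hwv⟩
    rw [hkey, Finset.card_insert_of_notMem]
    simp only [Finset.mem_filter, Finset.mem_univ, true_and, her, not_and]
    exact fun _ => asymm hwv

/-- (All indices and values 0-indexed.)  Let `σ` be 312-avoiding with code `a` and
admissible index `i` (so `j = i + a_i`).  Let `σ' = s_{j−1}σ` (swap values `j−1`, `j`)
and let `σ''` be obtained from `σ'` by exchanging the value `j−1` with the leftmost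
smaller value to its right.  Then the code of `σ'` is `a` with `a_i` replaced by
`a_i − 1`, the code of `σ''` is `a` with `a_i` replaced by `a_i − 2`, and both `σ'`
and `σ''` are 312-avoiding. -/
theorem stmt11 {n : ℕ} (σ : Equiv.Perm (Fin n)) (h312 : Avoids312 σ)
    (a : Fin n → ℕ) (ha : ∀ i, a i = lehmer σ i)
    (i : Fin n) (h2 : 2 ≤ a i)
    (hprev : ∀ i' : Fin n, (i' : ℕ) + 1 = (i : ℕ) → a i' + 1 ≤ a i)
    (j : ℕ) (hj : j = (i : ℕ) + a i) (hjn : j < n)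
    (hcode : a ⟨j - 1, by omega⟩ = 1 + a ⟨j, hjn⟩)
    (σ' : Equiv.Perm (Fin n))
    (hσ' : σ' = Equiv.swap (⟨j - 1, by omega⟩ : Fin n) ⟨j, hjn⟩ * σ) :
    Avoids312 σ' ∧
    (∀ k, lehmer σ' k = Function.update a i (a i - 1) k) ∧
    ∃ p : Fin n, σ'.symm ⟨j - 1, by omega⟩ < p ∧ σ' p < ⟨j - 1, by omega⟩ ∧
      (∀ p' : Fin n, σ'.symm ⟨j - 1, by omega⟩ < p' → p' < p →
        (⟨j - 1, by omega⟩ : Fin n) ≤ σ' p') ∧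
      Avoids312 (Equiv.swap (⟨j - 1, by omega⟩ : Fin n) (σ' p) * σ') ∧
      (∀ k, lehmer (Equiv.swap (⟨j - 1, by omega⟩ : Fin n) (σ' p) * σ') k
        = Function.update a i (a i - 2) k) := by
  have hj2 : 2 ≤ j := by omega
  have hjn1 : j - 1 < n := by omega
  set J1 : Fin n := ⟨j - 1, hjn1⟩ with hJ1
  set J : Fin n := ⟨j, hjn⟩ with hJ
  have hJ1v : (J1 : ℕ) = j - 1 := rfl
  have hJv : (J : ℕ) = j := rfl
  -- Step A : everything before i is smaller
  have hF0 : ∀ d : ℕ, ∀ m : Fin n, (m : ℕ) + d + 1 = (i : ℕ) → σ m < σ i := by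
    intro d
    induction d with
    | zero =>
      intro m hm
      by_contra hc
      have hmi : m ≠ i := by intro hh; rw [hh] at hm; omega
      have hlt : σ i < σ m :=
        lt_of_le_of_ne (not_lt.mp hc) (fun hh => hmi (σ.injective hh).symm)
      have hmi' : m < i := by rw [Fin.lt_def]; omega
      have hsub : insert i (Finset.univ.filter (fun x => i < x ∧ σ x < σ i)) ⊆
          Finset.univ.filter (fun x => m < x ∧ σ x < σ m) := by
        intro x hx
        simp only [Finset.mem_insert, Finset.mem_filter, Finset.mem_univ, true_and] at hx ⊢
        rcases hx with rfl | ⟨hx1, hx2⟩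
        · exact ⟨hmi', hlt⟩
        · exact ⟨lt_trans hmi' hx1, lt_trans hx2 hlt⟩
      have hnotmem : i ∉ Finset.univ.filter (fun x => i < x ∧ σ x < σ i) := by simp
      have hcard := Finset.card_le_card hsub
      rw [Finset.card_insert_of_notMem hnotmem] at hcard
      have hfin : a i + 1 ≤ a m := by rw [ha i, ha m]; exact hcard
      have := hprev m hm
      omega
    | succ d ih =>
      intro m hm
      by_contra hc
      have hmi : m ≠ i := by intro hh; rw [hh] at hm; omega
      have hlt : σ i < σ m :=
        lt_of_le_of_ne (not_lt.mp hc) (fun hh => hmi (σ.injective hh).symm)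
      have hm1n : (m : ℕ) + 1 < n := by have := i.isLt; omega
      set m1 : Fin n := ⟨(m : ℕ) + 1, hm1n⟩ with hm1
      have h1 : σ m1 < σ i := ih m1 (by simp [hm1]; omega)
      exact h312 ⟨m, m1, i, by rw [Fin.lt_def]; simp [hm1], by rw [Fin.lt_def]; simp [hm1]; omega,
        h1, hlt⟩
  have hlt0 : ∀ k : Fin n, k < i → σ k < σ i := by
    intro k hk
    exact hF0 ((i : ℕ) - (k : ℕ) - 1) k (by rw [Fin.lt_def] at hk; omega)
  -- Step B : σ i = J
  have hcard1 : (Finset.univ.filter (fun x => σ x < σ i)).card = (σ i : ℕ) := by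
    rw [← Fin.card_Iio (σ i)]
    apply Finset.card_bij (i := fun x _ => σ x)
    · intro x hx
      simp only [Finset.mem_filter, Finset.mem_univ, true_and] at hx
      simpa [Finset.mem_Iio] using hx
    · intro x hx y hy hxy
      exact σ.injective hxy
    · intro y hy
      refine ⟨σ.symm y, ?_, by simp⟩
      simp only [Finset.mem_filter, Finset.mem_univ, true_and, Equiv.apply_symm_apply]
      simpa [Finset.mem_Iio] using hy
  have hsplit : Finset.univ.filter (fun x => σ x < σ i) =
      (Finset.univ.filter (fun x => x < i)) ∪
      (Finset.univ.filter (fun x => i < x ∧ σ x < σ i)) := by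
    ext x
    simp only [Finset.mem_union, Finset.mem_filter, Finset.mem_univ, true_and]
    constructor
    · intro hx
      rcases lt_trichotomy x i with h | h | h
      · exact Or.inl h
      · exact absurd (h ▸ hx) (lt_irrefl _)
      · exact Or.inr ⟨h, hx⟩
    · rintro (h | ⟨_, h⟩)
      · exact hlt0 x h
      · exact h
  have hdisj : Disjoint (Finset.univ.filter (fun x : Fin n => x < i))
      (Finset.univ.filter (fun x => i < x ∧ σ x < σ i)) := by
    rw [Finset.disjoint_left]
    intro x hx1 hx2
    simp only [Finset.mem_filter, Finset.mem_univ, true_and] at hx1 hx2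
    exact absurd (lt_trans hx1 hx2.1) (lt_irrefl _)
  have hIio : Finset.univ.filter (fun x : Fin n => x < i) = Finset.Iio i := by
    ext x; simp
  have hσiv : (σ i : ℕ) = j := by
    have e1 : a i = (Finset.univ.filter (fun x => i < x ∧ σ x < σ i)).card := ha i
    rw [hsplit, Finset.card_union_of_disjoint hdisj, hIio, Fin.card_Iio] at hcard1
    omega
  have hσi : σ i = J := Fin.ext hσiv
  -- Step C : position of value j-1 is after i
  set r0 : Fin n := σ.symm J1 with hr0def
  have hr0 : σ r0 = J1 := Equiv.apply_symm_apply σ J1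
  have hr0i : r0 ≠ i := by
    intro hh
    rw [hh, hσi] at hr0
    have hval : j = j - 1 := congrArg Fin.val hr0
    omega
  have hir0 : i < r0 := by
    rcases lt_or_gt_of_ne hr0i with hc | hc
    swap
    · exact hc
    exfalso
    have hi1 : 1 ≤ (i : ℕ) := by
      have := (Fin.lt_def).mp hc; omega
    have hm0n : (i : ℕ) - 1 < n := by have := i.isLt; omega
    set m0 : Fin n := ⟨(i : ℕ) - 1, hm0n⟩ with hm0
    have hm0v : (m0 : ℕ) = (i : ℕ) - 1 := rfl
    have hm0i : (m0 : ℕ) + 1 = (i : ℕ) := by omega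
    have hprev0 := hprev m0 hm0i
    -- find y > i with σ y < σ i and ¬ σ y < σ m0
    have hy : ∃ y : Fin n, i < y ∧ σ y < σ i ∧ ¬ σ y < σ m0 := by
      by_contra hall
      push_neg at hall
      have hsub : Finset.univ.filter (fun x => i < x ∧ σ x < σ i) ⊆
          Finset.univ.filter (fun x => m0 < x ∧ σ x < σ m0) := by
        intro x hx
        simp only [Finset.mem_filter, Finset.mem_univ, true_and] at hx ⊢
        refine ⟨by rw [Fin.lt_def] at hx ⊢; omega, hall x hx.1 hx.2⟩
      have hfin : a i ≤ a m0 := by rw [ha i, ha m0]; exact Finset.card_le_card hsub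
      omega
    obtain ⟨y, hy1, hy2, hy3⟩ := hy
    have hym0 : m0 < y := by rw [Fin.lt_def] at hy1 ⊢; omega
    have hym0ne : σ m0 ≠ σ y := fun hh => (ne_of_lt hym0) (σ.injective hh)
    have hm0y : σ m0 < σ y := lt_of_le_of_ne (not_lt.mp hy3) hym0ne
    have hyr0 : y ≠ r0 := by
      intro hh
      rw [Fin.lt_def] at hc hy1
      rw [hh] at hy1; omega
    have hyv : (σ y : ℕ) < j - 1 := by
      have h1 : (σ y : ℕ) < j := by
        have := (Fin.lt_def).mp hy2; rw [hσiv] at this; exact this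
      have h2 : σ y ≠ J1 := by
        intro hh
        exact hyr0 (by rw [hr0def, ← hh, Equiv.symm_apply_apply])
      have h3 : (σ y : ℕ) ≠ j - 1 := fun hh => h2 (Fin.ext hh)
      omega
    by_cases hcase : r0 = m0
    · rw [hcase] at hr0
      have hvv : (σ m0 : ℕ) = j - 1 := by rw [hr0]
      have := (Fin.lt_def).mp hm0y
      omega
    · have hr0m0 : r0 < m0 := by
        rw [Fin.lt_def] at hc ⊢
        have : (r0 : ℕ) ≠ (m0 : ℕ) := fun hh => hcase (Fin.ext hh)
        simp only [hm0] at *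
        omega
      have hyJ1 : σ y < J1 := by rw [Fin.lt_def]; rw [hJ1v]; exact hyv
      exact h312 ⟨r0, m0, y, hr0m0, hym0, hm0y, by rw [hr0]; exact hyJ1⟩
  -- Step D : rewrite σ'
  have hσ'eq : σ' = σ * Equiv.swap i r0 := by
    rw [hσ', Equiv.mul_swap_eq_swap_mul, hσi, hr0, Equiv.swap_comm]
  have hJ1J : J1 < J := by rw [Fin.lt_def]; omega
  -- Step E : first swap
  have hwv1 : σ r0 < σ i := by rw [hr0, hσi]; exact hJ1J
  have hmid1 : ∀ m : Fin n, i < m → σ m < σ i → σ m ≤ σ r0 := by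
    intro m hm1 hm2
    rw [hσi] at hm2
    rw [hr0]
    rw [Fin.lt_def] at hm2
    rw [Fin.le_def]
    rw [hJv] at hm2
    rw [hJ1v]
    rcases eq_or_ne (σ m) J1 with hh | hh
    · rw [hh]
    · have : (σ m : ℕ) ≠ j - 1 := fun hc => hh (Fin.ext (by rw [hc, hJ1v]))
      omega
  obtain ⟨Ha1, Hb1, Hc1⟩ := lehmer_mul_swap σ i r0 hir0 hwv1 hmid1
  rw [← hσ'eq] at Ha1 Hb1 Hc1
  have hai : a i = lehmer σ i := ha i
  have code1 : ∀ k, lehmer σ' k = Function.update a i (a i - 1) k := by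
    intro k
    by_cases hk1 : k = i
    · rw [hk1, Function.update_self]
      omega
    by_cases hk2 : k = r0
    · rw [hk2, Function.update_of_ne hr0i, Hb1, ha]
    · rw [Function.update_of_ne hk1, Ha1 k hk1 hk2, ha]
  -- code condition for a
  have hacond : ∀ (k : ℕ) (hk : k + 1 < n),
      a ⟨k, by omega⟩ ≤ a ⟨k+1, hk⟩ + 1 := by
    intro k hk
    simp only [ha]
    exact code_cond σ h312 k hk
  -- Step F : σ' avoids
  have avoid1 : Avoids312 σ' := by
    apply avoids_of_code_cond
    intro k hk
    rw [code1, code1]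
    have hc0 := hacond k hk
    by_cases h1 : (⟨k, by omega⟩ : Fin n) = i
    · have h2 : (⟨k+1, hk⟩ : Fin n) ≠ i := by
        intro hh
        rw [← hh] at h1
        have := congrArg Fin.val h1
        simp at this
      rw [h1, Function.update_self, Function.update_of_ne h2]
      rw [h1] at hc0
      omega
    · rw [Function.update_of_ne h1]
      by_cases h2 : (⟨k+1, hk⟩ : Fin n) = i
      · rw [h2, Function.update_self]
        have := hprev ⟨k, by omega⟩ (by rw [← h2])
        omega
      · rw [Function.update_of_ne h2]
        exact hc0
  -- Step G : the position p
  have hσ'app : ∀ m : Fin n, m ≠ i → m ≠ r0 → σ' m = σ m := by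
    intro m h1 h2
    rw [hσ'eq]
    show σ (Equiv.swap i r0 m) = σ m
    rw [Equiv.swap_apply_of_ne_of_ne h1 h2]
  have hσ'i : σ' i = J1 := by
    rw [hσ'eq]
    show σ (Equiv.swap i r0 i) = J1
    rw [Equiv.swap_apply_left, hr0]
  have hσ'symm : σ'.symm J1 = i := by rw [← hσ'i, Equiv.symm_apply_apply]
  set P := Finset.univ.filter (fun m => i < m ∧ (σ' m : ℕ) < j - 1) with hP
  have hPne : P.Nonempty := by
    have hcard2 : 1 < (Finset.univ.filter (fun x => i < x ∧ σ x < σ i)).card := by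
      unfold lehmer at hai; omega
    obtain ⟨y1, hy1, y2, hy2, hy12⟩ := Finset.one_lt_card.mp hcard2
    have hkey : ∀ y : Fin n, y ∈ Finset.univ.filter (fun x => i < x ∧ σ x < σ i) →
        y ≠ r0 → y ∈ P := by
      intro y hy hyr0
      simp only [Finset.mem_filter, Finset.mem_univ, true_and] at hy
      have hyi : y ≠ i := ne_of_gt hy.1
      have h1 : (σ y : ℕ) < j := by
        have := (Fin.lt_def).mp hy.2; rw [hσiv] at this; exact this
      have h2 : (σ y : ℕ) ≠ j - 1 := by
        intro hh
        exact hyr0 (by rw [hr0def, ← Fin.ext hh (a := σ y) (b := J1), Equiv.symm_apply_apply])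
      simp only [hP, Finset.mem_filter, Finset.mem_univ, true_and]
      rw [hσ'app y hyi hyr0]
      exact ⟨hy.1, by omega⟩
    by_cases hc : y1 = r0
    · exact ⟨y2, hkey y2 hy2 (fun hh => hy12 (by rw [hc, hh]))⟩
    · exact ⟨y1, hkey y1 hy1 hc⟩
  set p : Fin n := P.min' hPne with hpdef
  have hpmem : p ∈ P := P.min'_mem hPne
  simp only [hP, Finset.mem_filter, Finset.mem_univ, true_and] at hpmem
  obtain ⟨hip, hpv⟩ := hpmem
  have hpJ1 : σ' p < J1 := by rw [Fin.lt_def, hJ1v]; exact hpv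
  have hpmin : ∀ p' : Fin n, i < p' → p' < p → J1 ≤ σ' p' := by
    intro p' h1 h2
    by_contra hc
    push_neg at hc
    have : p' ∈ P := by
      simp only [hP, Finset.mem_filter, Finset.mem_univ, true_and]
      exact ⟨h1, by rw [Fin.lt_def, hJ1v] at hc; exact hc⟩
    exact absurd (P.min'_le p' this) (not_le.mpr h2)
  have hpi : p ≠ i := ne_of_gt hip
  -- Step H : second swap
  have hσ''eq : Equiv.swap J1 (σ' p) * σ' = σ' * Equiv.swap i p := by
    rw [Equiv.mul_swap_eq_swap_mul, hσ'i]
  have hwv2 : σ' p < σ' i := by rw [hσ'i]; exact hpJ1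
  have hmid2 : ∀ m : Fin n, i < m → σ' m < σ' i → σ' m ≤ σ' p := by
    intro m h1 h2
    rw [hσ'i] at h2
    rcases lt_trichotomy m p with h3 | h3 | h3
    · exact absurd (hpmin m h1 h3) (not_le.mpr h2)
    · rw [h3]
    · by_contra hc
      push_neg at hc
      exact avoid1 ⟨i, p, m, hip, h3, hc, by rw [hσ'i]; exact h2⟩
  obtain ⟨Ha2, Hb2, Hc2⟩ := lehmer_mul_swap σ' i p hip hwv2 hmid2
  rw [← hσ''eq] at Ha2 Hb2 Hc2
  have code2 : ∀ k, lehmer (Equiv.swap J1 (σ' p) * σ') k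
      = Function.update a i (a i - 2) k := by
    intro k
    by_cases hk1 : k = i
    · rw [hk1, Function.update_self]
      have := code1 i
      rw [Function.update_self] at this
      omega
    by_cases hk2 : k = p
    · rw [hk2, Function.update_of_ne hpi, Hb2, code1, Function.update_of_ne hpi]
    · rw [Function.update_of_ne hk1, Ha2 k hk1 hk2, code1, Function.update_of_ne hk1]
  have avoid2 : Avoids312 (Equiv.swap J1 (σ' p) * σ') := by
    apply avoids_of_code_cond
    intro k hk
    rw [code2, code2]
    have hc0 := hacond k hk
    by_cases h1 : (⟨k, by omega⟩ : Fin n) = i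
    · have h2 : (⟨k+1, hk⟩ : Fin n) ≠ i := by
        intro hh
        have := congrArg Fin.val (h1.trans hh.symm)
        simp at this
      rw [h1, Function.update_self, Function.update_of_ne h2]
      rw [h1] at hc0
      omega
    · rw [Function.update_of_ne h1]
      by_cases h2 : (⟨k+1, hk⟩ : Fin n) = i
      · rw [h2, Function.update_self]
        have := hprev ⟨k, by omega⟩ (by have := congrArg Fin.val h2; simp at this ⊢; omega)
        omega
      · rw [Function.update_of_ne h2]
        exact hc0
  refine ⟨avoid1, code1, p, ?_, ?_, ?_, ?_, ?_⟩
  · show σ'.symm J1 < p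
    rw [hσ'symm]; exact hip
  · exact hpJ1
  · intro p' h1 h2
    rw [hσ'symm] at h1
    exact hpmin p' h1 h2
  · exact avoid2
  · exact code2
end
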